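/- arXiv:1707.05511 — 2 statements merged into one kernel-verified Lean document; each statement's English description precedes it below -/
import Mathlib

section
/- (Abstract backward estimate by induction on scales.) Let f : [−3/4, 0] → [0, ∞) be continuous, let C > 0, and suppose f has the property: for every r > 0 and every s ∈ [−1/2 + 2r², 0], if f(t) ≤ 2r⁻² for all t ∈ [s − r², s], then f is differentiable on [s − r²/2, s] with |f′(t)| ≤ C r⁻³ there. Assume also sup f < ∞. Then there exists ε > 0 depending only on C such that: for every r ≤ ε and every s ∈ [−1/2 + 2r², 0], if f(s) ≤ r⁻², then f(t) ≤ 2r⁻² for all t ∈ [s − r², s]. -/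
/-!
Call the conclusion at scale `r` the Claim at `r`. It holds for all small `r` because `f` is
bounded, and the Claim at `r/2` implies the Claim at `r` once `8 C r ≤ 1`: wherever
`f(u) ≤ 2 r⁻² ≤ (r/2)⁻²`, the Claim at `r/2` gives `f ≤ 2 (r/2)⁻²` just before `u`, so the
hypothesis yields `|f'| ≤ 8 C r⁻³` on `[u - r²/8, u]`. Walking back from `s` in steps of `r²/8`,
`f` therefore grows by at most `8 C r⁻³ · r² ≤ r⁻²` over `[s - r², s]`, so it stays below
`2 r⁻²` and the derivative estimate stays available at every step. Doubling the scale from the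
small ones reaches every `r ≤ 1 / (8 C)`.
-/

open Set Filter Topology

theorem le_add_mul_sub_of_abs_deriv_le {f : ℝ → ℝ} {a b L t : ℝ}
    (hf : ∀ x ∈ Icc a b, DifferentiableAt ℝ f x ∧ |deriv f x| ≤ L) (ht : t ∈ Icc a b) :
    f t ≤ f b + L * (b - t) := by
  have hmvt := (convex_Icc a b).norm_image_sub_le_of_norm_deriv_le (fun x hx => (hf x hx).1)
    (fun x hx => (hf x hx).2) ht (right_mem_Icc.2 (ht.1.trans ht.2))
  rw [Real.norm_eq_abs, Real.norm_eq_abs, abs_of_nonneg (sub_nonneg.2 ht.2)] at hmvt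
  linarith [neg_abs_le (f b - f t)]

theorem le_add_mul_sub_of_local {f : ℝ → ℝ} {a b h L M : ℝ}
    (hh : 0 < h) (hL : 0 ≤ L)
    (hloc : ∀ u ∈ Icc a b, f u ≤ M → ∀ t ∈ Icc a u, u - h ≤ t → f t ≤ f u + L * (u - t))
    (hM : f b + L * (b - a) ≤ M) :
    ∀ t ∈ Icc a b, f t ≤ f b + L * (b - t) := by
  have hsteps : ∀ n : ℕ, ∀ t ∈ Icc a b, b - n * h ≤ t → f t ≤ f b + L * (b - t) := by
    intro n
    induction n with
    | zero =>
      intro t ht hbt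
      have : t = b := le_antisymm ht.2 (by simpa using hbt)
      simp [this]
    | succ n ih =>
      intro t ht hbt
      set u := b - n * h
      by_cases htu : u ≤ t
      · exact ih t ht htu
      rw [not_le] at htu
      have hu : u ∈ Icc a b := ⟨ht.1.trans htu.le, sub_le_self b (by positivity)⟩
      have hfu := ih u hu le_rfl
      have hfuM : f u ≤ M := by nlinarith [hu.1]
      have hft := hloc u hu hfuM t ⟨ht.1, htu.le⟩ (by push_cast at hbt; linarith)
      linarith
  intro t ht
  obtain ⟨n, hn⟩ := exists_nat_ge ((b - a) / h)
  exact hsteps n t ht (by rw [div_le_iff₀ hh] at hn; linarith [ht.1])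

theorem forall_of_eventually_nhdsGT_of_half {P : ℝ → Prop} {R : ℝ}
    (hsmall : ∀ᶠ r in 𝓝[>] 0, P r) (hstep : ∀ r, 0 < r → r ≤ R → P (r / 2) → P r) :
    ∀ r, 0 < r → r ≤ R → P r := by
  obtain ⟨δ, hδ, hP⟩ := mem_nhdsGT_iff_exists_Ioo_subset.1 hsmall
  have hscales : ∀ n : ℕ, ∀ r, 0 < r → r ≤ R → r < δ * 2 ^ n → P r := by
    intro n
    induction n with
    | zero => exact fun r hr _ hrδ => hP ⟨hr, by simpa using hrδ⟩
    | succ n ih =>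
      intro r hr hrR hrδ
      refine hstep r hr hrR (ih (r / 2) (by positivity) (by linarith) ?_)
      rw [pow_succ] at hrδ
      linarith
  intro r hr hrR
  obtain ⟨n, hn⟩ := pow_unbounded_of_one_lt (r / δ) one_lt_two
  exact hscales n r hr hrR (by rwa [div_lt_iff₀' (mem_Ioi.1 hδ)] at hn)

/-- The Claim in the proof of the backward pseudolocality estimate, at scale `r`. -/
def BackwardBound (f : ℝ → ℝ) (r : ℝ) : Prop :=
  ∀ s ∈ Icc (-(1 / 2) + 2 * r ^ 2 : ℝ) 0, f s ≤ 1 / r ^ 2 → ∀ t ∈ Icc (s - r ^ 2) s, f t ≤ 2 / r ^ 2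

theorem eventually_backwardBound {f : ℝ → ℝ} {B : ℝ}
    (hB : ∀ t ∈ Icc (-(3 / 4) : ℝ) 0, f t ≤ B) : ∀ᶠ r in 𝓝[>] 0, BackwardBound f r := by
  have hlarge : Tendsto (fun r : ℝ => 2 * r⁻¹ ^ 2) (𝓝[>] 0) atTop :=
    ((tendsto_pow_atTop two_ne_zero).comp tendsto_inv_nhdsGT_zero).const_mul_atTop two_pos
  filter_upwards [hlarge.eventually_ge_atTop B] with r hr s hs _ t ht
  have hBr : B ≤ 2 / r ^ 2 := by simpa [div_eq_mul_inv] using hr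
  exact (hB t ⟨by nlinarith [hs.1, ht.1], ht.2.trans hs.2⟩).trans hBr

theorem BackwardBound.of_half {f : ℝ → ℝ} {C r : ℝ} (hC : 0 ≤ C)
    (hder : ∀ r : ℝ, 0 < r → ∀ s ∈ Icc (-(1 / 2) + 2 * r ^ 2 : ℝ) 0,
      (∀ t ∈ Icc (s - r ^ 2) s, f t ≤ 2 / r ^ 2) →
      ∀ t ∈ Icc (s - r ^ 2 / 2) s, DifferentiableAt ℝ f t ∧ |deriv f t| ≤ C / r ^ 3)
    (hr : 0 < r) (hrC : 8 * C * r ≤ 1) (hhalf : BackwardBound f (r / 2)) :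
    BackwardBound f r := by
  intro s hs hfs
  set L := C / (r / 2) ^ 3
  have hLr : L * r ^ 2 ≤ 1 / r ^ 2 := by
    have hL : L * r ^ 2 = 8 * C / r := by simp only [L]; field_simp; ring
    rw [hL, div_le_div_iff₀ hr (by positivity)]
    nlinarith
  have hlocal : ∀ u ∈ Icc (s - r ^ 2) s, f u ≤ 2 / r ^ 2 →
      ∀ t ∈ Icc (s - r ^ 2) u, u - r ^ 2 / 8 ≤ t → f t ≤ f u + L * (u - t) := by
    intro u hu hfu t ht htu
    have hu' : u ∈ Icc (-(1 / 2) + 2 * (r / 2) ^ 2 : ℝ) 0 :=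
      ⟨by nlinarith [hs.1, hu.1], hu.2.trans hs.2⟩
    have hfu' : f u ≤ 1 / (r / 2) ^ 2 := hfu.trans (by
      rw [div_le_div_iff₀ (by positivity) (by positivity)]; nlinarith)
    refine le_add_mul_sub_of_abs_deriv_le (a := t) (fun x hx => ?_) ⟨le_rfl, ht.2⟩
    exact hder (r / 2) (by positivity) u hu' (hhalf u hu' hfu') x ⟨by linarith [hx.1], hx.2⟩
  intro t ht
  have hM : f s + L * (s - (s - r ^ 2)) ≤ 2 / r ^ 2 := by
    rw [sub_sub_cancel]; linarith [show 1 / r ^ 2 + 1 / r ^ 2 = 2 / r ^ 2 by ring]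
  calc f t ≤ f s + L * (s - t) :=
        le_add_mul_sub_of_local (by positivity) (by positivity) hlocal hM t ht
    _ ≤ f s + L * (s - (s - r ^ 2)) := by gcongr; linarith [ht.1]
    _ ≤ 2 / r ^ 2 := hM

/-- abstract backward estimate by induction on scales: let
`f : [−3/4, 0] → [0, ∞)` be continuous and bounded, `C > 0`, and suppose that
whenever `f ≤ 2 r⁻²` on `[s − r², s]` (with `s ∈ [−1/2 + 2r², 0]`), `f` is
differentiable with `|f′| ≤ C r⁻³` on `[s − r²/2, s]`.  Then there exists
`ε > 0` depending only on `C` such that for every `r ≤ ε` and every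
`s ∈ [−1/2 + 2r², 0]`, `f(s) ≤ r⁻²` implies `f ≤ 2 r⁻²` on `[s − r², s]`. -/
theorem backward_estimate_dyadic_induction (C : ℝ) (hC : 0 < C) :
    ∃ ε > (0 : ℝ), ∀ f : ℝ → ℝ,
      ContinuousOn f (Set.Icc (-(3 / 4) : ℝ) 0) →
      (∀ t ∈ Set.Icc (-(3 / 4) : ℝ) 0, 0 ≤ f t) →
      (∃ B : ℝ, ∀ t ∈ Set.Icc (-(3 / 4) : ℝ) 0, f t ≤ B) →
      (∀ r : ℝ, 0 < r → ∀ s ∈ Set.Icc (-(1 / 2) + 2 * r ^ 2 : ℝ) 0,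
        (∀ t ∈ Set.Icc (s - r ^ 2) s, f t ≤ 2 / r ^ 2) →
        ∀ t ∈ Set.Icc (s - r ^ 2 / 2) s,
          DifferentiableAt ℝ f t ∧ |deriv f t| ≤ C / r ^ 3) →
      ∀ r : ℝ, 0 < r → r ≤ ε →
        ∀ s ∈ Set.Icc (-(1 / 2) + 2 * r ^ 2 : ℝ) 0,
          f s ≤ 1 / r ^ 2 → ∀ t ∈ Set.Icc (s - r ^ 2) s, f t ≤ 2 / r ^ 2 := by
  refine ⟨1 / (8 * C), by positivity, fun f _ _ ⟨B, hB⟩ hder => ?_⟩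
  refine forall_of_eventually_nhdsGT_of_half (eventually_backwardBound hB) fun r hr hrε => ?_
  exact BackwardBound.of_half hC.le hder hr (by rwa [le_div_iff₀ (by positivity), mul_comm] at hrε)
end

section
/- Let (X,d) be a metric space, r_i = 2^{-i}, and A_i ⊂ X finite sets such that the balls {B_{r_i}(x) : x ∈ A_i} are pairwise disjoint and A_i ⊆ B₂(A₀) for all i, and suppose A_{i₀} = ∅ for some i₀. If each ball B_{r_i}(x), x ∈ A_i carries measure at least ε and the total measure is at most Λ, then one can choose a single finite set A ⊂ X with #A ≤ Λ/ε such that for every i ≤ i₀, B_{2r_i}(A_i) ⊆ B_{4r_i}(A). -/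
open MeasureTheory
open scoped ENNReal

open Classical in
/-- Auxiliary construction: process scales from `i₀` downward, adding points of
`A (i₀ - (k+1))` that are far from all previously chosen points. -/
noncomputable def srcBuild {X : Type*} [MetricSpace X]
    (A : ℕ → Finset X) (r : ℕ → ℝ) (i₀ : ℕ) : ℕ → Finset X
  | 0 => ∅
  | (k+1) =>
      srcBuild A r i₀ k ∪ ((A (i₀ - (k+1))).filter
        (fun x => ∀ y ∈ srcBuild A r i₀ k, r (i₀ - (k+1)) + r (i₀ - k) ≤ dist x y))

open Classical in
lemma srcBuild_mono {X : Type*} [MetricSpace X]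
    (A : ℕ → Finset X) (r : ℕ → ℝ) (i₀ : ℕ) {k l : ℕ} (h : k ≤ l) :
    srcBuild A r i₀ k ⊆ srcBuild A r i₀ l := by
  induction l with
  | zero => simp [Nat.le_zero.mp h]
  | succ l ih =>
    rcases Nat.le_succ_iff.mp h with h' | h'
    · exact (ih h').trans (by rw [srcBuild]; exact Finset.subset_union_left)
    · subst h'; exact Finset.Subset.refl _

/-- scale-refinement covering construction: let `r_i = 2^{-i}` and
let `A_i ⊂ X` be finite sets whose balls `B_{r_i}(x)`, `x ∈ A_i`, are pairwise
disjoint, with `A_i ⊆ B₂(A₀)` and `A_{i₀} = ∅`.  If each ball `B_{r_i}(x)`,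
`x ∈ A_i`, has measure at least `ε` and the total measure is at most `Λ`, then
there is a single finite set `A` with `#A ≤ Λ/ε` such that for every `i ≤ i₀`,
`B_{2 r_i}(A_i) ⊆ B_{4 r_i}(A)`. -/
theorem scale_refinement_covering {X : Type*} [MetricSpace X]
    [MeasurableSpace X] [BorelSpace X]
    (μ : Measure X) (Λ ε : ℝ≥0∞) (hΛ : μ Set.univ ≤ Λ)
    (hε : 0 < ε) (hε' : ε ≠ ⊤)
    (A : ℕ → Finset X) (i₀ : ℕ) (r : ℕ → ℝ)
    (hr : ∀ i, r i = (2 : ℝ)⁻¹ ^ i)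
    (hdisj : ∀ i, (A i : Set X).Pairwise fun x y =>
      Disjoint (Metric.ball x (r i)) (Metric.ball y (r i)))
    (hnear : ∀ i, ∀ x ∈ A i, ∃ y ∈ A 0, x ∈ Metric.ball y 2)
    (hempty : A i₀ = ∅)
    (hmass : ∀ i, ∀ x ∈ A i, ε ≤ μ (Metric.ball x (r i))) :
    ∃ A' : Finset X, (A'.card : ℝ≥0∞) ≤ Λ / ε ∧
      ∀ i ≤ i₀,
        (⋃ x ∈ (A i : Set X), Metric.ball x (2 * r i)) ⊆
          ⋃ y ∈ (A' : Set X), Metric.ball y (4 * r i) := by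
  classical
  have hrpos : ∀ i, 0 < r i := by
    intro i; rw [hr i]; positivity
  have hranti : ∀ {i j : ℕ}, i ≤ j → r j ≤ r i := by
    intro i j hij
    rw [hr i, hr j]
    exact pow_le_pow_of_le_one (by norm_num) (by norm_num) hij
  set B : ℕ → Finset X := srcBuild A r i₀ with hBdef
  -- Key invariant: there is an assignment of radii making the balls disjoint
  have key : ∀ k, ∃ ρ : X → ℝ,
      (∀ y ∈ B k, ρ y ≤ r (i₀ - k) ∧ ε ≤ μ (Metric.ball y (ρ y))) ∧
      Set.Pairwise (B k : Set X)
        (fun y z => Disjoint (Metric.ball y (ρ y)) (Metric.ball z (ρ z))) := by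
    intro k
    induction k with
    | zero =>
      refine ⟨fun _ => 0, ?_, ?_⟩ <;> simp [hBdef, srcBuild]
    | succ k ih =>
      obtain ⟨ρ, hρ, hpair⟩ := ih
      set i := i₀ - (k+1) with hi
      refine ⟨fun y => if y ∈ B k then ρ y else r i, ?_, ?_⟩
      · intro y hy
        by_cases hyk : y ∈ B k
        · simp only [hyk, if_pos]
          refine ⟨((hρ y hyk).1).trans (hranti ?_), (hρ y hyk).2⟩
          omega
        · simp only [hyk, if_neg, if_false]
          have : y ∈ (A i).filter
              (fun x => ∀ z ∈ srcBuild A r i₀ k, r (i₀-(k+1)) + r (i₀-k) ≤ dist x z) := by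
            rw [hBdef, srcBuild] at hy
            rcases Finset.mem_union.mp hy with h | h
            · exact absurd h hyk
            · exact h
          have hyA : y ∈ A i := (Finset.mem_filter.mp this).1
          exact ⟨le_refl _, hmass i y hyA⟩
      · intro y hy z hz hne
        -- unpack membership
        have mem_iff : ∀ w, w ∈ B (k+1) → w ∈ B k ∨
            (w ∈ A i ∧ ∀ u ∈ B k, r i + r (i₀ - k) ≤ dist w u) := by
          intro w hw
          rw [hBdef, srcBuild] at hw
          rcases Finset.mem_union.mp hw with h | h
          · exact Or.inl h
          · exact Or.inr ⟨(Finset.mem_filter.mp h).1, (Finset.mem_filter.mp h).2⟩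
        by_cases hyk : y ∈ B k <;> by_cases hzk : z ∈ B k
        · simp only [hyk, hzk, if_pos]
          exact hpair hyk hzk hne
        · -- y old, z new
          rcases mem_iff z hz with h | ⟨hzA, hzfar⟩
          · exact absurd h hzk
          simp only [hyk, hzk, if_pos, if_neg, if_false]
          refine (Metric.ball_disjoint_ball ?_).symm
          calc r i + ρ y ≤ r i + r (i₀ - k) := by
                have := (hρ y hyk).1; linarith
            _ ≤ dist z y := hzfar y hyk
        · -- y new, z old
          rcases mem_iff y hy with h | ⟨hyA, hyfar⟩
          · exact absurd h hyk
          simp only [hyk, hzk, if_pos, if_neg, if_false]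
          refine Metric.ball_disjoint_ball ?_
          calc r i + ρ z ≤ r i + r (i₀ - k) := by
                have := (hρ z hzk).1; linarith
            _ ≤ dist y z := hyfar z hzk
        · -- both new
          rcases mem_iff y hy with h | ⟨hyA, _⟩
          · exact absurd h hyk
          rcases mem_iff z hz with h | ⟨hzA, _⟩
          · exact absurd h hzk
          simp only [hyk, hzk, if_neg, if_false]
          exact hdisj i hyA hzA hne
  obtain ⟨ρ, hρ, hpair⟩ := key i₀
  refine ⟨B i₀, ?_, ?_⟩
  · -- cardinality bound
    have hpd : Set.PairwiseDisjoint (B i₀ : Set X)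
        (fun y => Metric.ball y (ρ y)) := hpair
    have hcard : ((B i₀).card : ℝ≥0∞) * ε ≤ Λ := by
      calc ((B i₀).card : ℝ≥0∞) * ε = ∑ _y ∈ B i₀, ε := by
            rw [Finset.sum_const, nsmul_eq_mul]
        _ ≤ ∑ y ∈ B i₀, μ (Metric.ball y (ρ y)) :=
            Finset.sum_le_sum fun y hy => (hρ y hy).2
        _ = μ (⋃ y ∈ B i₀, Metric.ball y (ρ y)) :=
            (measure_biUnion_finset hpd fun y _ => Metric.isOpen_ball.measurableSet).symm
        _ ≤ μ Set.univ := measure_mono (Set.subset_univ _)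
        _ ≤ Λ := hΛ
    rw [ENNReal.le_div_iff_mul_le (Or.inl hε.ne') (Or.inl hε')]
    exact hcard
  · -- covering
    have cover : ∀ k, ∀ x ∈ A (i₀ - (k+1)), ∃ y ∈ B (k+1),
        dist x y ≤ 2 * r (i₀ - (k+1)) := by
      intro k x hx
      by_cases h : ∀ y ∈ B k, r (i₀-(k+1)) + r (i₀-k) ≤ dist x y
      · refine ⟨x, ?_, ?_⟩
        · rw [hBdef, srcBuild]
          exact Finset.mem_union_right _ (Finset.mem_filter.mpr ⟨hx, h⟩)
        · simp only [dist_self]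
          have := hrpos (i₀ - (k+1)); linarith
      · push_neg at h
        obtain ⟨y, hy, hlt⟩ := h
        refine ⟨y, ?_, ?_⟩
        · rw [hBdef, srcBuild]; exact Finset.mem_union_left _ hy
        · have h1 : r (i₀ - k) ≤ r (i₀ - (k+1)) := hranti (by omega)
          linarith
    intro i hi
    rcases eq_or_lt_of_le hi with heq | hlt
    · subst heq; simp [hempty]
    · intro z hz
      simp only [Set.mem_iUnion, exists_prop] at hz
      obtain ⟨x, hxA, hzx⟩ := hz
      have hk : i₀ - ((i₀ - i - 1) + 1) = i := by omega
      obtain ⟨y, hyB, hxy⟩ := cover (i₀ - i - 1) x (by rw [hk]; exact hxA)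
      rw [hk] at hxy
      have hyB' : y ∈ B i₀ := srcBuild_mono A r i₀ (by omega) hyB
      simp only [Set.mem_iUnion, exists_prop]
      refine ⟨y, hyB', ?_⟩
      rw [Metric.mem_ball] at hzx ⊢
      calc dist z y ≤ dist z x + dist x y := dist_triangle z x y
        _ < 2 * r i + 2 * r i := by linarith
        _ = 4 * r i := by ring
end
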